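/- For the closed 2-form ω_s = (4x³ − 2xs + t)(dt∧dx + dy∧dz) + (2y − 2z) dt∧dy + (12x² − 2s + 2)y dz∧dx − (2z + y) dt∧dz − (12x² − 2s + 1)·2z dx∧dy on ℝ⁴, the exterior derivative dω_s vanishes identically, and the zero set of ω_s equals {(t,x,y,z) : 4x³ − 2xs + t = 0, y = 0, z = 0}, the critical point set of the flipping model F_s(t,x,y,z) = (t, x⁴ − sx² + tx + y² − z²). -/

import Mathlib

noncomputable def pT (f : ℝ → ℝ → ℝ → ℝ → ℝ) (t x y z : ℝ) : ℝ :=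
  deriv (fun u => f u x y z) t
noncomputable def pX (f : ℝ → ℝ → ℝ → ℝ → ℝ) (t x y z : ℝ) : ℝ :=
  deriv (fun u => f t u y z) x
noncomputable def pY (f : ℝ → ℝ → ℝ → ℝ → ℝ) (t x y z : ℝ) : ℝ :=
  deriv (fun u => f t x u z) y
noncomputable def pZ (f : ℝ → ℝ → ℝ → ℝ → ℝ) (t x y z : ℝ) : ℝ :=
  deriv (fun u => f t x y u) z

/-! Coefficients of
`ω_s = (4x³ − 2xs + t)(dt∧dx + dy∧dz) + (2y − 2z) dt∧dy + (12x² − 2s + 2)y dz∧dx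
       − (2z + y) dt∧dz − (12x² − 2s + 1)·2z dx∧dy`. -/
def Dtx (s : ℝ) : ℝ → ℝ → ℝ → ℝ → ℝ := fun t x _ _ => 4 * x ^ 3 - 2 * x * s + t
def Dty (s : ℝ) : ℝ → ℝ → ℝ → ℝ → ℝ := fun _ _ y z => 2 * y - 2 * z
def Dtz (s : ℝ) : ℝ → ℝ → ℝ → ℝ → ℝ := fun _ _ y z => -(2 * z + y)
def Dxy (s : ℝ) : ℝ → ℝ → ℝ → ℝ → ℝ := fun _ x _ z => -((12 * x ^ 2 - 2 * s + 1) * (2 * z))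
def Dxz (s : ℝ) : ℝ → ℝ → ℝ → ℝ → ℝ := fun _ x y _ => -((12 * x ^ 2 - 2 * s + 2) * y)
def Dyz (s : ℝ) : ℝ → ℝ → ℝ → ℝ → ℝ := fun t x _ _ => 4 * x ^ 3 - 2 * x * s + t

/-! `dω_s = 0` is a direct computation: apart from `∂ₓ(4x³ − 2xs + t) = 12x² − 2s`, every partial
derivative involved is that of a constant or an affine function. The coefficients `2y − 2z` and
`−(2z + y)` vanish together only at `y = z = 0`. Finally `dF_s = (dt, dφ_s)` with
`φ_s = x⁴ − sx² + tx + y² − z²`, and such a map has rank `< 2` exactly when `dφ_s` kills the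
fibre directions, i.e. when `∂ₓφ_s = 4x³ − 2xs + t`, `∂_yφ_s = 2y` and `∂_zφ_s = −2z` all
vanish. -/

theorem pX_Dyz (s t x y z : ℝ) : pX (Dyz s) t x y z = 12 * x ^ 2 - 2 * s := by
  have h := (((hasDerivAt_pow 3 x).const_mul 4).sub
    (((hasDerivAt_id' x).const_mul 2).mul_const s)).add_const t
  exact h.deriv.trans (by norm_num; ring)

theorem omega_closed (s t x y z : ℝ) :
    pT (Dxy s) t x y z - pX (Dty s) t x y z + pY (Dtx s) t x y z = 0 ∧
    pT (Dxz s) t x y z - pX (Dtz s) t x y z + pZ (Dtx s) t x y z = 0 ∧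
    pT (Dyz s) t x y z - pY (Dtz s) t x y z + pZ (Dty s) t x y z = 0 ∧
    pX (Dyz s) t x y z - pY (Dxz s) t x y z + pZ (Dxy s) t x y z = 0 := by
  rw [pX_Dyz]
  refine ⟨by simp [pT, pX, pY, Dxy, Dty, Dtx], by simp [pT, pX, pZ, Dxz, Dtz, Dtx],
    by norm_num [pT, pY, pZ, Dyz, Dtz, Dty], ?_⟩
  simp only [pY, Dxz, deriv.fun_neg', deriv_const_mul_id', pZ, Dxy, deriv_const_mul_field']
  ring

theorem omega_eq_zero_iff (s t x y z : ℝ) :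
    (Dtx s t x y z = 0 ∧ Dty s t x y z = 0 ∧ Dtz s t x y z = 0 ∧ Dxy s t x y z = 0 ∧
      Dxz s t x y z = 0 ∧ Dyz s t x y z = 0) ↔
      4 * x ^ 3 - 2 * x * s + t = 0 ∧ y = 0 ∧ z = 0 := by
  simp only [Dtx, Dty, Dtz, Dxy, Dxz, Dyz]
  constructor
  · rintro ⟨h, hty, htz, -, -, -⟩
    exact ⟨h, by linarith, by linarith⟩
  · rintro ⟨h, rfl, rfl⟩
    simp [h]

namespace LinearMap

variable {K V : Type*} [Field K] [AddCommGroup V] [Module K V]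

theorem rank_lt_finrank_iff_not_surjective {W : Type*} [AddCommGroup W] [Module K W]
    [FiniteDimensional K W] (f : V →ₗ[K] W) :
    f.rank < Module.finrank K W ↔ ¬ Function.Surjective f := by
  rw [LinearMap.rank, ← Module.finrank_eq_rank, Nat.cast_lt, ← range_eq_top]
  exact ⟨fun h htop => lt_irrefl _ (htop ▸ finrank_top K W ▸ h), Submodule.finrank_lt⟩

theorem surjective_fst_prod_iff (ℓ : K × V →ₗ[K] K) :
    Function.Surjective ((fst K K V).prod ℓ) ↔ ∃ v, ℓ (0, v) ≠ 0 := by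
  constructor
  · intro h
    obtain ⟨⟨t, v⟩, hv⟩ := h (0, 1)
    obtain ⟨rfl, hv⟩ := Prod.mk.inj hv
    exact ⟨v, hv ▸ one_ne_zero⟩
  · rintro ⟨v, hv⟩ ⟨a, b⟩
    refine ⟨(a, 0) + ((b - ℓ (a, 0)) / ℓ (0, v)) • (0, v), ?_⟩
    rw [map_add, map_smul]
    simp [div_mul_cancel₀ _ hv]

theorem rank_fst_prod_lt_two_iff (ℓ : K × V →ₗ[K] K) :
    ((fst K K V).prod ℓ).rank < 2 ↔ ∀ v, ℓ (0, v) = 0 := by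
  have h := ((fst K K V).prod ℓ).rank_lt_finrank_iff_not_surjective
  rw [Module.finrank_prod, Module.finrank_self] at h
  simpa [surjective_fst_prod_iff] using h

end LinearMap

def flippingPotential (s : ℝ) (q : ℝ × ℝ × ℝ × ℝ) : ℝ :=
  q.2.1 ^ 4 - s * q.2.1 ^ 2 + q.1 * q.2.1 + q.2.2.1 ^ 2 - q.2.2.2 ^ 2

theorem differentiable_flippingPotential (s : ℝ) : Differentiable ℝ (flippingPotential s) := by
  unfold flippingPotential
  fun_prop

theorem fderiv_flippingPotential_zero_fst (s : ℝ) (p : ℝ × ℝ × ℝ × ℝ) (v : ℝ × ℝ × ℝ) :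
    fderiv ℝ (flippingPotential s) p (0, v) =
      (4 * p.2.1 ^ 3 - 2 * p.2.1 * s + p.1) * v.1 + 2 * p.2.2.1 * v.2.1 - 2 * p.2.2.2 * v.2.2 := by
  have ht : HasFDerivAt (𝕜 := ℝ) (fun q : ℝ × ℝ × ℝ × ℝ => q.1) _ p := hasFDerivAt_fst
  have hx : HasFDerivAt (𝕜 := ℝ) (fun q : ℝ × ℝ × ℝ × ℝ => q.2.1) _ p := hasFDerivAt_snd.fst
  have hy : HasFDerivAt (𝕜 := ℝ) (fun q : ℝ × ℝ × ℝ × ℝ => q.2.2.1) _ p := hasFDerivAt_snd.snd.fst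
  have hz : HasFDerivAt (𝕜 := ℝ) (fun q : ℝ × ℝ × ℝ × ℝ => q.2.2.2) _ p := hasFDerivAt_snd.snd.snd
  have h := ((((hx.pow 4).sub ((hx.pow 2).const_mul s)).add (ht.mul hx)).add (hy.pow 2)).sub
    (hz.pow 2)
  rw [HasFDerivAt.fderiv (f := flippingPotential s) h]
  simp only [sub_apply, add_apply, smul_apply, ContinuousLinearMap.comp_apply,
    ContinuousLinearMap.coe_snd', ContinuousLinearMap.coe_fst', smul_eq_mul]
  ring

theorem rank_fderiv_flipping_lt_two_iff (s : ℝ) (p : ℝ × ℝ × ℝ × ℝ) :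
    (fderiv ℝ (fun q => (q.1, flippingPotential s q)) p).toLinearMap.rank < 2 ↔
      4 * p.2.1 ^ 3 - 2 * p.2.1 * s + p.1 = 0 ∧ p.2.2.1 = 0 ∧ p.2.2.2 = 0 := by
  rw [differentiableAt_fst.fderiv_prodMk (differentiable_flippingPotential s p), fderiv_fst,
    ContinuousLinearMap.coe_prod, ContinuousLinearMap.coe_fst, LinearMap.rank_fst_prod_lt_two_iff]
  simp only [ContinuousLinearMap.coe_coe, fderiv_flippingPotential_zero_fst]
  constructor
  · intro h
    have ht := h (1, 0, 0)
    have hy := h (0, 1, 0)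
    have hz := h (0, 0, 1)
    norm_num at ht hy hz
    exact ⟨ht, hy, hz⟩
  · rintro ⟨ht, hy, hz⟩ v
    simp [ht, hy, hz]

/-- The 2-form `ω_s` of the flipping model is closed, and its zero set equals
`{4x³ − 2xs + t = 0, y = 0, z = 0}`, the critical point set of
`F_s(t,x,y,z) = (t, x⁴ − sx² + tx + y² − z²)`. -/
theorem stmt11 (s : ℝ) :
    (∀ t x y z : ℝ,
      pT (Dxy s) t x y z - pX (Dty s) t x y z + pY (Dtx s) t x y z = 0 ∧
      pT (Dxz s) t x y z - pX (Dtz s) t x y z + pZ (Dtx s) t x y z = 0 ∧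
      pT (Dyz s) t x y z - pY (Dtz s) t x y z + pZ (Dty s) t x y z = 0 ∧
      pX (Dyz s) t x y z - pY (Dxz s) t x y z + pZ (Dxy s) t x y z = 0) ∧
    {p : ℝ × ℝ × ℝ × ℝ |
        Dtx s p.1 p.2.1 p.2.2.1 p.2.2.2 = 0 ∧ Dty s p.1 p.2.1 p.2.2.1 p.2.2.2 = 0 ∧
        Dtz s p.1 p.2.1 p.2.2.1 p.2.2.2 = 0 ∧ Dxy s p.1 p.2.1 p.2.2.1 p.2.2.2 = 0 ∧
        Dxz s p.1 p.2.1 p.2.2.1 p.2.2.2 = 0 ∧ Dyz s p.1 p.2.1 p.2.2.1 p.2.2.2 = 0} =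
      {p : ℝ × ℝ × ℝ × ℝ |
        4 * p.2.1 ^ 3 - 2 * p.2.1 * s + p.1 = 0 ∧ p.2.2.1 = 0 ∧ p.2.2.2 = 0} ∧
    {p : ℝ × ℝ × ℝ × ℝ |
        4 * p.2.1 ^ 3 - 2 * p.2.1 * s + p.1 = 0 ∧ p.2.2.1 = 0 ∧ p.2.2.2 = 0} =
      {p : ℝ × ℝ × ℝ × ℝ |
        LinearMap.rank (fderiv ℝ
          (fun q : ℝ × ℝ × ℝ × ℝ =>
            ((q.1, q.2.1 ^ 4 - s * q.2.1 ^ 2 + q.1 * q.2.1 + q.2.2.1 ^ 2 - q.2.2.2 ^ 2)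
              : ℝ × ℝ)) p).toLinearMap < 2} := by
  refine ⟨fun t x y z => omega_closed s t x y z, ?_, ?_⟩
  · ext ⟨t, x, y, z⟩
    exact omega_eq_zero_iff s t x y z
  · ext p
    exact (rank_fderiv_flipping_lt_two_iff s p).symm
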